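/- The propensity score is a balancing score: in the binary treatment setting, the covariates X are conditionally independent of the treatment indicator T given the propensity score e(X) = P(T = 1 | X). Formally, for any value s of e(X) with P(e(X) = s) > 0, P(T = 1 | e(X) = s, X = x) = P(T = 1 | e(X) = s) for every x with e(x) = s and P(X = x, e(X) = s) > 0. -/

import Mathlib

open scoped Classical

noncomputable def Pr {Ω : Type*} [Fintype Ω] (μ : Ω → ℝ) (A : Ω → Prop) : ℝ :=
  ∑ ω, if A ω then μ ω else 0

/-- Conditional probability P(A | B). -/
noncomputable def CondPr {Ω : Type*} [Fintype Ω] (μ : Ω → ℝ) (A B : Ω → Prop) : ℝ :=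
  Pr μ (fun ω => A ω ∧ B ω) / Pr μ B

/-! Conditioning on the finer variable `X` and averaging over a fibre of `e ∘ X` gives back the
common value `s` of the propensity score on that fibre, exactly as conditioning on `X` alone
does. Both conditional probabilities of `T = 1` are therefore `s`. -/

section Pr

variable {Ω : Type*} [Fintype Ω] {μ : Ω → ℝ}

lemma Pr_congr {A B : Ω → Prop} (h : ∀ ω, A ω ↔ B ω) : Pr μ A = Pr μ B := by
  simp only [Pr, h]

@[simp]
lemma Pr_false : Pr μ (fun _ => False) = 0 := by
  simp [Pr]

lemma Pr_nonneg (hμ : ∀ ω, 0 ≤ μ ω) (A : Ω → Prop) : 0 ≤ Pr μ A :=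
  Finset.sum_nonneg fun ω _ => by split_ifs <;> simp [hμ ω]

lemma Pr_mono (hμ : ∀ ω, 0 ≤ μ ω) {A B : Ω → Prop} (h : ∀ ω, A ω → B ω) :
    Pr μ A ≤ Pr μ B :=
  Finset.sum_le_sum fun ω _ => by
    by_cases hA : A ω <;> by_cases hB : B ω <;> simp_all [hμ ω]

lemma Pr_eq_sum_Pr_and_eq {𝒳 : Type*} [Fintype 𝒳] (A : Ω → Prop) (X : Ω → 𝒳) :
    Pr μ A = ∑ x, Pr μ (fun ω => A ω ∧ X ω = x) := by
  simp only [Pr]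
  rw [Finset.sum_comm]
  refine Finset.sum_congr rfl fun ω _ => ?_
  by_cases hA : A ω <;> simp [hA]

/-- On a null event `B` both sides vanish, whatever the junk value of `CondPr μ A B`. -/
lemma Pr_and_eq_mul_of_condPr_eq (hμ : ∀ ω, 0 ≤ μ ω) {A B : Ω → Prop} {c : ℝ}
    (h : 0 < Pr μ B → CondPr μ A B = c) : Pr μ (fun ω => A ω ∧ B ω) = c * Pr μ B := by
  rcases (Pr_nonneg hμ B).lt_or_eq with hB | hB
  · rw [← h hB, CondPr, div_mul_cancel₀ _ hB.ne']
  · rw [← hB, mul_zero]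
    exact le_antisymm (hB ▸ Pr_mono hμ fun ω h => h.2) (Pr_nonneg hμ _)

lemma condPr_eq_of_Pr_and_eq_mul {A B : Ω → Prop} {c : ℝ} (hB : 0 < Pr μ B)
    (h : Pr μ (fun ω => A ω ∧ B ω) = c * Pr μ B) : CondPr μ A B = c := by
  rw [CondPr, h, mul_div_cancel_right₀ _ hB.ne']

lemma condPr_comp_eq_of_condPr_eq {𝒳 : Type*} [Fintype 𝒳] (hμ : ∀ ω, 0 ≤ μ ω)
    {A : Ω → Prop} {X : Ω → 𝒳} {e : 𝒳 → ℝ}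
    (he : ∀ x, 0 < Pr μ (fun ω => X ω = x) → CondPr μ A (fun ω => X ω = x) = e x)
    {s : ℝ} (hs : 0 < Pr μ (fun ω => e (X ω) = s)) :
    CondPr μ A (fun ω => e (X ω) = s) = s := by
  have hfibre : ∀ x, Pr μ (fun ω => (A ω ∧ e (X ω) = s) ∧ X ω = x)
      = s * Pr μ (fun ω => e (X ω) = s ∧ X ω = x) := by
    intro x
    by_cases hx : e x = s
    · have hAx : ∀ ω, (A ω ∧ e (X ω) = s) ∧ X ω = x ↔ A ω ∧ X ω = x := by
        intro ω; constructor
        · exact fun h => ⟨h.1.1, h.2⟩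
        · exact fun h => ⟨⟨h.1, h.2 ▸ hx⟩, h.2⟩
      have hx' : ∀ ω, e (X ω) = s ∧ X ω = x ↔ X ω = x :=
        fun ω => ⟨And.right, fun h => ⟨h ▸ hx, h⟩⟩
      rw [Pr_congr hAx, Pr_congr hx']
      exact Pr_and_eq_mul_of_condPr_eq hμ fun hpos => hx ▸ he x hpos
    · have hAempty : ∀ ω, (A ω ∧ e (X ω) = s) ∧ X ω = x ↔ False :=
        fun ω => iff_false_intro fun h => hx (h.2 ▸ h.1.2)
      have hempty : ∀ ω, e (X ω) = s ∧ X ω = x ↔ False :=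
        fun ω => iff_false_intro fun h => hx (h.2 ▸ h.1)
      rw [Pr_congr hAempty, Pr_congr hempty, Pr_false, mul_zero]
  refine condPr_eq_of_Pr_and_eq_mul hs ?_
  rw [Pr_eq_sum_Pr_and_eq _ X, Pr_eq_sum_Pr_and_eq _ X, Finset.mul_sum]
  exact Finset.sum_congr rfl fun x _ => hfibre x

end Pr

theorem stmt_1_general {Ω 𝒳 : Type*} [Fintype Ω] [Fintype 𝒳]
    (μ : Ω → ℝ) (hμ : ∀ ω, 0 ≤ μ ω)
    (X : Ω → 𝒳) (T : Ω → Bool)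
    (e : 𝒳 → ℝ)
    -- e is the propensity score: e(x) = P(T = 1 | X = x) on the support of X.
    (he : ∀ x : 𝒳, 0 < Pr μ (fun ω => X ω = x) →
      e x = CondPr μ (fun ω => T ω = true) (fun ω => X ω = x)) :
    ∀ s : ℝ, 0 < Pr μ (fun ω => e (X ω) = s) →
      ∀ x : 𝒳, e x = s → 0 < Pr μ (fun ω => X ω = x ∧ e (X ω) = s) →
        CondPr μ (fun ω => T ω = true) (fun ω => X ω = x ∧ e (X ω) = s)
          = CondPr μ (fun ω => T ω = true) (fun ω => e (X ω) = s) := by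
  intro s hs x hex hxs
  have hevent : ∀ ω, X ω = x ∧ e (X ω) = s ↔ X ω = x :=
    fun ω => ⟨And.left, fun h => ⟨h, h ▸ hex⟩⟩
  have hx : 0 < Pr μ (fun ω => X ω = x) := Pr_congr hevent ▸ hxs
  have hcond : CondPr μ (fun ω => T ω = true) (fun ω => X ω = x ∧ e (X ω) = s)
      = CondPr μ (fun ω => T ω = true) (fun ω => X ω = x) := by
    simp only [CondPr, hevent]
  rw [hcond, ← he x hx, hex,
    condPr_comp_eq_of_condPr_eq hμ (fun x' hx' => (he x' hx').symm) hs]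

theorem stmt_1 {Ω 𝒳 : Type*} [Fintype Ω] [Fintype 𝒳]
    (μ : Ω → ℝ) (hμ : ∀ ω, 0 ≤ μ ω) (hμ1 : ∑ ω, μ ω = 1)
    (X : Ω → 𝒳) (T : Ω → Bool)
    (e : 𝒳 → ℝ)
    -- e is the propensity score: e(x) = P(T = 1 | X = x) on the support of X.
    (he : ∀ x : 𝒳, 0 < Pr μ (fun ω => X ω = x) →
      e x = CondPr μ (fun ω => T ω = true) (fun ω => X ω = x)) :
    ∀ s : ℝ, 0 < Pr μ (fun ω => e (X ω) = s) →
      ∀ x : 𝒳, e x = s → 0 < Pr μ (fun ω => X ω = x ∧ e (X ω) = s) →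
        CondPr μ (fun ω => T ω = true) (fun ω => X ω = x ∧ e (X ω) = s)
          = CondPr μ (fun ω => T ω = true) (fun ω => e (X ω) = s) :=
  stmt_1_general μ hμ X T e he
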